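/- arXiv:1408.6340 — 4 statements merged into one kernel-verified Lean document; each statement's English description precedes it below -/
import Mathlib

section
/- Let ε ∈ {1,−1} and let β be the 2l×2l block matrix [[0, I_l],[ε·I_l, 0]] over 𝔽_q (so ε = −1 gives the symplectic group Sp(2l,q) and ε = 1 gives the orthogonal group O(2l,q)). Let g = [[A,B],[C,D]] (l×l blocks) satisfy ᵀg·β·g = β, and suppose C is the diagonal matrix whose first m diagonal entries equal 1 and whose remaining entries equal 0, with 0 < m < l. Then, writing A = [[A₁₁,A₁₂],[A₂₁,A₂₂]] with respect to the partition (m, l−m), one has A₁₂ = 0 and ᵀA₁₁ = −ε·A₁₁ (i.e. A₁₁ is symmetric in the symplectic case and skew-symmetric in the orthogonal case). -/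
open Matrix

/-- form of the `A` block when `C = diag(1,…,1,0,…,0)` (`m` ones,
`0 < m < l`) for `g ∈ Sp(2l,q)` (ε = -1) or `g ∈ O(2l,q)` (ε = 1). -/
theorem stmt_1 (K : Type*) [Field K] [Fintype K] (hchar : ringChar K ≠ 2)
    (l m : ℕ) (hl : 2 ≤ l) (hm : 0 < m) (hml : m < l)
    (ε : K) (hε : ε = 1 ∨ ε = -1)
    (A11 : Matrix (Fin m) (Fin m) K) (A12 : Matrix (Fin m) (Fin (l - m)) K)
    (A21 : Matrix (Fin (l - m)) (Fin m) K) (A22 : Matrix (Fin (l - m)) (Fin (l - m)) K)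
    (A B C D : Matrix (Fin m ⊕ Fin (l - m)) (Fin m ⊕ Fin (l - m)) K)
    (hA : A = fromBlocks A11 A12 A21 A22)
    (hC : C = fromBlocks 1 0 0 0)
    (β g : Matrix ((Fin m ⊕ Fin (l - m)) ⊕ (Fin m ⊕ Fin (l - m)))
      ((Fin m ⊕ Fin (l - m)) ⊕ (Fin m ⊕ Fin (l - m))) K)
    (hβ : β = fromBlocks 0 1 (ε • 1) 0)
    (hg : g = fromBlocks A B C D)
    (horth : gᵀ * β * g = β) :
    A12 = 0 ∧ A11ᵀ = (-ε) • A11 := by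
  have hε0 : ε ≠ 0 := by rcases hε with h | h <;> simp [h]
  subst hg hβ
  rw [Matrix.fromBlocks_transpose, Matrix.fromBlocks_multiply,
    Matrix.fromBlocks_multiply] at horth
  have h11 := congrArg Matrix.toBlocks₁₁ horth
  rw [Matrix.toBlocks_fromBlocks₁₁] at h11
  subst hA hC
  rw [← Matrix.fromBlocks_zero (n := Fin m) (l := Fin m)] at h11
  simp only [Matrix.fromBlocks_transpose, Matrix.transpose_zero, Matrix.transpose_one,
    Matrix.mul_zero, Matrix.zero_mul, Matrix.one_mul, Matrix.mul_one, zero_add, add_zero,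
    Matrix.mul_smul, Matrix.smul_mul, Matrix.fromBlocks_smul, Matrix.fromBlocks_multiply,
    Matrix.fromBlocks_add, smul_zero] at h11
  have h12 := congrArg Matrix.toBlocks₁₂ h11
  have h11' := congrArg Matrix.toBlocks₁₁ h11
  simp only [Matrix.toBlocks_fromBlocks₁₂, Matrix.toBlocks_fromBlocks₁₁] at h12 h11'
  constructor
  · have h : ε • A12 = 0 := by simpa using h12
    exact (smul_eq_zero.mp h).resolve_left hε0
  · have h : ε • A11 + A11ᵀ = 0 := by simpa using h11'
    have h2 := eq_neg_of_add_eq_zero_right h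
    rw [neg_smul]
    exact h2
end

section
/- Consider 2l×2l matrices over 𝔽_q indexed by {1,…,l,−1,…,−l}. For each 1 ≤ i ≤ l, the matrix w_i := I − e_{i,i} − e_{−i,−i} − e_{i,−i} − e_{−i,i} lies in the subgroup of GL(2l,𝔽_q) generated by the D_l Chevalley generators together with w_l; moreover w_i satisfies ᵀw_i·β·w_i = β for β = [[0,I_l],[I_l,0]] (so w_i ∈ O(2l,q)), and for every 2l×2l matrix g the i-th row of w_i·g equals the negative of the (−i)-th row of g and the (−i)-th row of w_i·g equals the negative of the i-th row of g. -/
open Matrix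

/-- The `D_l` Chevalley generators, as a set of invertible `2l × 2l` matrices.
Index `Sum.inl i` plays the role of `i ∈ {1,…,l}` and `Sum.inr i` of `-i`. -/
def DlGens (K : Type*) [Field K] (l : ℕ) :
    Set (Matrix (Fin l ⊕ Fin l) (Fin l ⊕ Fin l) K)ˣ :=
  {u | ∃ t : K,
    (∃ i j : Fin l, i ≠ j ∧ (u : Matrix (Fin l ⊕ Fin l) (Fin l ⊕ Fin l) K) =
      1 + t • (single (Sum.inl i) (Sum.inl j) (1 : K)
        - single (Sum.inr j) (Sum.inr i) (1 : K))) ∨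
    (∃ i j : Fin l, i < j ∧ (u : Matrix (Fin l ⊕ Fin l) (Fin l ⊕ Fin l) K) =
      1 + t • (single (Sum.inl i) (Sum.inr j) (1 : K)
        - single (Sum.inl j) (Sum.inr i) (1 : K))) ∨
    (∃ i j : Fin l, i < j ∧ (u : Matrix (Fin l ⊕ Fin l) (Fin l ⊕ Fin l) K) =
      1 + t • (single (Sum.inr i) (Sum.inl j) (1 : K)
        - single (Sum.inr j) (Sum.inl i) (1 : K)))}

/-!
`w_i` is the `β`-reflection `1 - v vᵀ` in the vector `v = e_i + e_{-i}`: since `β v = v` and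
`vᵀ v = 2`, it preserves `β`, and `w_i g = g - v (g_i + g_{-i})` swaps rows `±i` up to sign. For
`i ≠ l` the Weyl element `n = x_{i,l}(1) x_{l,i}(-1) x_{i,l}(1)`, a signed permutation matrix
exchanging `±i` with `±l`, satisfies `n w_l = w_i n`, so `w_i = n w_l n⁻¹`.
-/

namespace DlChevalley

open Sum

variable {ι R : Type*} [DecidableEq ι] [CommRing R]

def chevalleyX (i j : ι) (t : R) : Matrix (ι ⊕ ι) (ι ⊕ ι) R :=
  1 + t • (single (inl i) (inl j) 1 - single (inr j) (inr i) 1)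

def signedSwap (i : ι) : Matrix (ι ⊕ ι) (ι ⊕ ι) R :=
  1 - single (inl i) (inl i) 1 - single (inr i) (inr i) 1
    - single (inl i) (inr i) 1 - single (inr i) (inl i) 1

def swapVec (i : ι) : ι ⊕ ι → R :=
  Sum.elim (Pi.single i 1) (Pi.single i 1)

theorem one_sub_vecMulVec_transpose_mul_mul [Fintype ι] (v : ι → R) (β : Matrix ι ι R)
    (hβv : β *ᵥ v = v) (hvβ : v ᵥ* β = v) (hvv : v ⬝ᵥ v = 2) :
    (1 - vecMulVec v v)ᵀ * β * (1 - vecMulVec v v) = β := by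
  rw [transpose_sub, transpose_one, transpose_vecMulVec, sub_mul, one_mul, mul_sub, mul_one,
    sub_mul, vecMulVec_mul, hvβ, mul_vecMulVec, hβv, vecMulVec_mul_vecMulVec, hvv, two_smul,
    vecMulVec_add]
  abel

theorem chevalleyX_zero (i j : ι) : chevalleyX i j (0 : R) = 1 := by
  simp [chevalleyX]

theorem signedSwap_eq_one_sub_vecMulVec (i : ι) :
    signedSwap i = 1 - vecMulVec (swapVec i) (swapVec (R := R) i) := by
  ext (a | a) (b | b) <;>
    simp [signedSwap, swapVec, vecMulVec_apply, single_apply, Pi.single_apply, one_apply,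
      ite_and, eq_comm] <;>
    split_ifs <;> rfl

variable [Fintype ι] {i j : ι}

theorem swapVec_vecMul (i : ι) (g : Matrix (ι ⊕ ι) (ι ⊕ ι) R) :
    swapVec i ᵥ* g = g (inl i) + g (inr i) := by
  ext b
  simp [swapVec, vecMul, dotProduct, Fintype.sum_sum_type, Pi.single_apply]

theorem swapVec_dotProduct_self (i : ι) : swapVec (R := R) i ⬝ᵥ swapVec i = 2 := by
  simp [swapVec, dotProduct, Fintype.sum_sum_type, Pi.single_apply, one_add_one_eq_two]

theorem fromBlocks_mulVec_swapVec (i : ι) :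
    (fromBlocks 0 1 1 0 : Matrix (ι ⊕ ι) (ι ⊕ ι) R) *ᵥ swapVec i = swapVec i := by
  simp only [fromBlocks_mulVec, swapVec, elim_comp_inl, elim_comp_inr, zero_mulVec, one_mulVec,
    zero_add, add_zero]

theorem swapVec_vecMul_fromBlocks (i : ι) :
    swapVec i ᵥ* (fromBlocks 0 1 1 0 : Matrix (ι ⊕ ι) (ι ⊕ ι) R) = swapVec i := by
  simp only [vecMul_fromBlocks, swapVec, elim_comp_inl, elim_comp_inr, vecMul_zero, vecMul_one,
    zero_add, add_zero]

theorem signedSwap_transpose_mul_mul (i : ι) :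
    (signedSwap i)ᵀ * fromBlocks 0 1 1 0 * signedSwap i =
      (fromBlocks 0 1 1 0 : Matrix (ι ⊕ ι) (ι ⊕ ι) R) := by
  rw [signedSwap_eq_one_sub_vecMulVec]
  exact one_sub_vecMulVec_transpose_mul_mul _ _ (fromBlocks_mulVec_swapVec i)
    (swapVec_vecMul_fromBlocks i) (swapVec_dotProduct_self i)

theorem signedSwap_mul (i : ι) (g : Matrix (ι ⊕ ι) (ι ⊕ ι) R) :
    signedSwap i * g = g - vecMulVec (swapVec i) (g (inl i) + g (inr i)) := by
  rw [signedSwap_eq_one_sub_vecMulVec, sub_mul, one_mul, vecMulVec_mul, swapVec_vecMul]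

theorem signedSwap_mul_apply_inl (i : ι) (g : Matrix (ι ⊕ ι) (ι ⊕ ι) R) (b : ι ⊕ ι) :
    (signedSwap i * g : Matrix (ι ⊕ ι) (ι ⊕ ι) R) (inl i) b = -g (inr i) b := by
  simp [signedSwap_mul, vecMulVec_apply, swapVec]

theorem signedSwap_mul_apply_inr (i : ι) (g : Matrix (ι ⊕ ι) (ι ⊕ ι) R) (b : ι ⊕ ι) :
    (signedSwap i * g : Matrix (ι ⊕ ι) (ι ⊕ ι) R) (inr i) b = -g (inl i) b := by
  simp [signedSwap_mul, vecMulVec_apply, swapVec]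

theorem signedSwap_mul_self (i : ι) : signedSwap i * signedSwap (R := R) i = 1 := by
  simp only [signedSwap, sub_mul, mul_sub, one_mul, mul_one, single_mul_single_same,
    single_mul_single_of_ne, ne_eq, reduceCtorEq, not_false_eq_true]
  abel

theorem chevalleyX_mul_chevalleyX (h : i ≠ j) (s t : R) :
    chevalleyX i j s * chevalleyX i j t = chevalleyX i j (s + t) := by
  simp only [chevalleyX, add_mul, mul_add, sub_mul, mul_sub, one_mul, mul_one, smul_mul_smul,
    single_mul_single_of_ne, ne_eq, reduceCtorEq, not_false_eq_true, inl.injEq, inr.injEq, h,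
    Ne.symm h, add_smul, sub_self, smul_zero, add_zero]
  abel

def signedSwapUnit (i : ι) : (Matrix (ι ⊕ ι) (ι ⊕ ι) R)ˣ :=
  ⟨signedSwap i, signedSwap i, signedSwap_mul_self i, signedSwap_mul_self i⟩

def chevalleyXUnit (h : i ≠ j) (t : R) : (Matrix (ι ⊕ ι) (ι ⊕ ι) R)ˣ where
  val := chevalleyX i j t
  inv := chevalleyX i j (-t)
  val_inv := by rw [chevalleyX_mul_chevalleyX h, add_neg_cancel, chevalleyX_zero]
  inv_val := by rw [chevalleyX_mul_chevalleyX h, neg_add_cancel, chevalleyX_zero]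

def weylUnit (h : i ≠ j) : (Matrix (ι ⊕ ι) (ι ⊕ ι) R)ˣ :=
  chevalleyXUnit h 1 * chevalleyXUnit h.symm (-1) * chevalleyXUnit h 1

theorem coe_weylUnit (h : i ≠ j) : (weylUnit (R := R) h : Matrix (ι ⊕ ι) (ι ⊕ ι) R) =
    1 - single (inl i) (inl i) 1 - single (inl j) (inl j) 1
      - single (inr i) (inr i) 1 - single (inr j) (inr j) 1
      + single (inl i) (inl j) 1 - single (inl j) (inl i) 1
      + single (inr i) (inr j) 1 - single (inr j) (inr i) 1 := by
  change chevalleyX i j 1 * chevalleyX j i (-1) * chevalleyX i j 1 = _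
  simp only [chevalleyX, one_smul, neg_smul, add_mul, mul_add, sub_mul, mul_sub, one_mul,
    mul_one, neg_mul, mul_neg, single_mul_single_same, single_mul_single_of_ne, ne_eq,
    reduceCtorEq, not_false_eq_true, inl.injEq, inr.injEq, h, Ne.symm h, sub_zero, zero_sub,
    neg_zero]
  abel

theorem signedSwapUnit_eq_weylUnit_conj (h : i ≠ j) :
    signedSwapUnit (R := R) i = weylUnit h * signedSwapUnit j * (weylUnit h)⁻¹ := by
  rw [eq_mul_inv_iff_mul_eq]
  ext : 1
  simp only [Units.val_mul, signedSwapUnit, coe_weylUnit h, signedSwap, add_mul, mul_add,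
    sub_mul, mul_sub, one_mul, mul_one, single_mul_single_same, single_mul_single_of_ne, ne_eq,
    reduceCtorEq, not_false_eq_true, inl.injEq, inr.injEq, h, sub_zero, add_zero]
  abel

theorem weylUnit_mem_closure {K : Type*} [Field K] {l : ℕ} {i j : Fin l} (h : i ≠ j)
    (T : Set (Matrix (Fin l ⊕ Fin l) (Fin l ⊕ Fin l) K)ˣ) :
    weylUnit h ∈ Subgroup.closure (DlGens K l ∪ T) := by
  have hX {a b : Fin l} (hab : a ≠ b) (t : K) :
      chevalleyXUnit hab t ∈ Subgroup.closure (DlGens K l ∪ T) :=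
    Subgroup.subset_closure (Or.inl ⟨t, Or.inl ⟨a, b, hab, rfl⟩⟩)
  exact mul_mem (mul_mem (hX h 1) (hX h.symm (-1))) (hX h 1)

end DlChevalley

open DlChevalley

/-- the elements `w_i = I - e_{i,i} - e_{-i,-i} - e_{i,-i} - e_{-i,i}`
lie in the subgroup generated by the `D_l` Chevalley generators together with
`w_l`; they are orthogonal, and `w_i·g` swaps the `i`-th and `(-i)`-th rows of
`g` with a sign change. -/
theorem stmt_7 (K : Type*) [Field K]
    (l : ℕ) (hl : 2 ≤ l) (i : Fin l)
    (wi wl β : Matrix (Fin l ⊕ Fin l) (Fin l ⊕ Fin l) K)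
    (hwi : wi = 1 - single (Sum.inl i) (Sum.inl i) (1 : K)
        - single (Sum.inr i) (Sum.inr i) (1 : K)
        - single (Sum.inl i) (Sum.inr i) (1 : K)
        - single (Sum.inr i) (Sum.inl i) (1 : K))
    (hwl : wl = 1 - single (Sum.inl (⟨l - 1, by omega⟩ : Fin l))
          (Sum.inl (⟨l - 1, by omega⟩ : Fin l)) (1 : K)
        - single (Sum.inr (⟨l - 1, by omega⟩ : Fin l))
          (Sum.inr (⟨l - 1, by omega⟩ : Fin l)) (1 : K)
        - single (Sum.inl (⟨l - 1, by omega⟩ : Fin l))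
          (Sum.inr (⟨l - 1, by omega⟩ : Fin l)) (1 : K)
        - single (Sum.inr (⟨l - 1, by omega⟩ : Fin l))
          (Sum.inl (⟨l - 1, by omega⟩ : Fin l)) (1 : K))
    (hβ : β = fromBlocks 0 1 1 0) :
    (∃ u ∈ Subgroup.closure (DlGens K l ∪
        {v : (Matrix (Fin l ⊕ Fin l) (Fin l ⊕ Fin l) K)ˣ |
          (v : Matrix (Fin l ⊕ Fin l) (Fin l ⊕ Fin l) K) = wl}),
      (u : Matrix (Fin l ⊕ Fin l) (Fin l ⊕ Fin l) K) = wi) ∧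
    wiᵀ * β * wi = β ∧
    ∀ g : Matrix (Fin l ⊕ Fin l) (Fin l ⊕ Fin l) K,
      (∀ j, (wi * g) (Sum.inl i) j = -(g (Sum.inr i) j)) ∧
      (∀ j, (wi * g) (Sum.inr i) j = -(g (Sum.inl i) j)) := by
  subst hwi hwl hβ
  refine ⟨⟨signedSwapUnit i, ?_, rfl⟩, signedSwap_transpose_mul_mul i,
    fun g => ⟨signedSwap_mul_apply_inl i g, signedSwap_mul_apply_inr i g⟩⟩
  set j₀ : Fin l := ⟨l - 1, by omega⟩
  have hw : signedSwapUnit j₀ ∈ Subgroup.closure (DlGens K l ∪ {v | v.val = signedSwap j₀}) :=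
    Subgroup.subset_closure (Or.inr rfl)
  obtain rfl | hij := eq_or_ne i j₀
  · exact hw
  rw [signedSwapUnit_eq_weylUnit_conj hij]
  exact mul_mem (mul_mem (weylUnit_mem_closure hij _) hw) (inv_mem (weylUnit_mem_closure hij _))
end

section
/- Consider (2l+1)×(2l+1) matrices over 𝔽_q indexed by {0,1,…,l,−1,…,−l}. (1) For every λ ∈ 𝔽_q that is a nonzero square, the diagonal matrix diag(1,1,…,1,λ,1,…,1,λ⁻¹) (entry 1 at index 0, λ at index l, λ⁻¹ at index −l, and 1 elsewhere) lies in the subgroup of GL(2l+1,𝔽_q) generated by the B_l Chevalley generators. (2) One has the identity x_{l,0}(1)·x_{0,l}(−1)·x_{l,0}(1) = I − e_{−l,−l} − e_{−l,l} − e_{l,l} − 2e_{0,0} − e_{l,−l}, and multiplying this element by w_l yields diag(−1,1,…,1); hence diag(−1,1,…,1) lies in the subgroup generated by the B_l Chevalley generators together with w_l. -/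
/-! All matrices involved act only on the coordinates `0, l, -l`, so every identity is checked
by multiplying out matrix units. With `n(t) = x_{l,0}(t) x_{0,l}(-t⁻¹) x_{l,0}(t)` the Weyl
element of the short root `ε_l`, the product `n(t) n(1)` is `diag(1, …, t², …, t⁻²)`.
Moreover `n(1)` agrees with `w_l` on the coordinates `±l` and is `-1` at `0`, so
`n(1) w_l = diag(-1, 1, …, 1)`. -/

open Matrix

/-- Index set `{0, 1,…,l, -1,…,-l}` for `(2l+1) × (2l+1)` matrices:
`Sum.inl 0` is the index `0`, `Sum.inr (Sum.inl i)` is `i ∈ {1,…,l}` and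
`Sum.inr (Sum.inr i)` is `-i`. -/
abbrev BIdx (l : ℕ) := Fin 1 ⊕ (Fin l ⊕ Fin l)

/-- The index `0`. -/
def bz (l : ℕ) : BIdx l := Sum.inl 0

/-- The index `i ∈ {1,…,l}`. -/
def bp {l : ℕ} (i : Fin l) : BIdx l := Sum.inr (Sum.inl i)

/-- The index `-i` for `i ∈ {1,…,l}`. -/
def bm {l : ℕ} (i : Fin l) : BIdx l := Sum.inr (Sum.inr i)

/-- `e_{a,b}`: the square matrix with `1` in position `(a,b)` and `0` elsewhere. -/
def EE (K : Type*) [Field K] {n : Type*} [DecidableEq n] (a b : n) :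
    Matrix n n K := Matrix.single a b 1

/-- The `B_l` Chevalley generators, as a set of invertible
`(2l+1) × (2l+1)` matrices. -/
def BlGens (K : Type*) [Field K] (l : ℕ) : Set (Matrix (BIdx l) (BIdx l) K)ˣ :=
  {u | ∃ t : K,
    (∃ i j : Fin l, i ≠ j ∧ (u : Matrix (BIdx l) (BIdx l) K) =
      1 + t • (EE K (bp i) (bp j) - EE K (bm j) (bm i))) ∨
    (∃ i j : Fin l, i < j ∧ (u : Matrix (BIdx l) (BIdx l) K) =
      1 + t • (EE K (bp i) (bm j) - EE K (bp j) (bm i))) ∨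
    (∃ i j : Fin l, i < j ∧ (u : Matrix (BIdx l) (BIdx l) K) =
      1 + t • (EE K (bm i) (bp j) - EE K (bm j) (bp i))) ∨
    (∃ i : Fin l, (u : Matrix (BIdx l) (BIdx l) K) =
      1 + t • ((2 : K) • EE K (bp i) (bz l) - EE K (bz l) (bm i))
        - t ^ 2 • EE K (bp i) (bm i)) ∨
    (∃ i : Fin l, (u : Matrix (BIdx l) (BIdx l) K) =
      1 + t • (-((2 : K) • EE K (bm i) (bz l)) + EE K (bz l) (bp i))
        - t ^ 2 • EE K (bm i) (bp i))}

section MatrixUnits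

variable {K n : Type*} [Field K] [Fintype n] [DecidableEq n]

@[simp]
theorem EE_mul_EE_same (a b c : n) : EE K a b * EE K b c = EE K a c := by
  simp [EE]

theorem EE_mul_EE_of_ne {b c : n} (a d : n) (h : b ≠ c) : EE K a b * EE K c d = 0 := by
  simp [EE, h]

end MatrixUnits

section Indices

variable {l : ℕ} (i j : Fin l)

@[simp] theorem bz_ne_bp : bz l ≠ bp i := by simp [bz, bp]
@[simp] theorem bp_ne_bz : bp i ≠ bz l := by simp [bz, bp]
@[simp] theorem bz_ne_bm : bz l ≠ bm i := by simp [bz, bm]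
@[simp] theorem bm_ne_bz : bm i ≠ bz l := by simp [bz, bm]
@[simp] theorem bp_ne_bm : bp i ≠ bm j := by simp [bp, bm]
@[simp] theorem bm_ne_bp : bm i ≠ bp j := by simp [bp, bm]

end Indices

namespace ShortRoot

variable (K : Type*) [Field K] {l : ℕ} (i : Fin l)

/-- `x_{i,0}(t)`. -/
def xPlus (t : K) : Matrix (BIdx l) (BIdx l) K :=
  1 + t • ((2 : K) • EE K (bp i) (bz l) - EE K (bz l) (bm i)) - t ^ 2 • EE K (bp i) (bm i)

/-- `x_{0,i}(t)`. -/
def xMinus (t : K) : Matrix (BIdx l) (BIdx l) K :=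
  1 + t • (-((2 : K) • EE K (bm i) (bz l)) + EE K (bz l) (bp i)) - t ^ 2 • EE K (bm i) (bp i)

/-- `w_i`. -/
def wRefl : Matrix (BIdx l) (BIdx l) K :=
  1 - EE K (bp i) (bp i) - EE K (bm i) (bm i) - EE K (bp i) (bm i) - EE K (bm i) (bp i)

theorem xPlus_mul_xPlus (s t : K) : xPlus K i s * xPlus K i t = xPlus K i (s + t) := by
  simp (disch := simp) only [xPlus, mul_add, add_mul, mul_sub, sub_mul, mul_one, one_mul,
    smul_mul_assoc, mul_smul_comm, smul_sub, EE_mul_EE_same, EE_mul_EE_of_ne, smul_zero]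
  module

theorem xMinus_mul_xMinus (s t : K) : xMinus K i s * xMinus K i t = xMinus K i (s + t) := by
  simp (disch := simp) only [xMinus, mul_add, add_mul, mul_sub, sub_mul, mul_one, one_mul,
    smul_mul_assoc, mul_smul_comm, smul_add, smul_neg, neg_mul, mul_neg, EE_mul_EE_same,
    EE_mul_EE_of_ne, smul_zero]
  module

theorem wRefl_mul_self : wRefl K i * wRefl K i = 1 := by
  simp (disch := simp) only [wRefl, mul_sub, sub_mul, mul_one, one_mul,
    EE_mul_EE_same, EE_mul_EE_of_ne]
  module

@[simp] theorem xPlus_zero : xPlus K i 0 = 1 := by simp [xPlus]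
@[simp] theorem xMinus_zero : xMinus K i 0 = 1 := by simp [xMinus]

@[simps]
def xPlusUnit (t : K) : (Matrix (BIdx l) (BIdx l) K)ˣ :=
  ⟨xPlus K i t, xPlus K i (-t), by simp [xPlus_mul_xPlus], by simp [xPlus_mul_xPlus]⟩

@[simps]
def xMinusUnit (t : K) : (Matrix (BIdx l) (BIdx l) K)ˣ :=
  ⟨xMinus K i t, xMinus K i (-t), by simp [xMinus_mul_xMinus], by simp [xMinus_mul_xMinus]⟩

theorem xPlusUnit_mem_closure (t : K) : xPlusUnit K i t ∈ Subgroup.closure (BlGens K l) :=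
  Subgroup.subset_closure ⟨t, .inr <| .inr <| .inr <| .inl ⟨i, rfl⟩⟩

theorem xMinusUnit_mem_closure (t : K) : xMinusUnit K i t ∈ Subgroup.closure (BlGens K l) :=
  Subgroup.subset_closure ⟨t, .inr <| .inr <| .inr <| .inr ⟨i, rfl⟩⟩

def weylUnit (t : K) : (Matrix (BIdx l) (BIdx l) K)ˣ :=
  xPlusUnit K i t * xMinusUnit K i (-t⁻¹) * xPlusUnit K i t

theorem weylUnit_mem_closure (t : K) : weylUnit K i t ∈ Subgroup.closure (BlGens K l) :=
  mul_mem (mul_mem (xPlusUnit_mem_closure K i t) (xMinusUnit_mem_closure K i _))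
    (xPlusUnit_mem_closure K i t)

theorem coe_weylUnit {t : K} (ht : t ≠ 0) :
    (weylUnit K i t : Matrix (BIdx l) (BIdx l) K) =
      1 - (2 : K) • EE K (bz l) (bz l) - EE K (bp i) (bp i) - EE K (bm i) (bm i)
        - t ^ 2 • EE K (bp i) (bm i) - (t ^ 2)⁻¹ • EE K (bm i) (bp i) := by
  simp (disch := simp) only [weylUnit, Units.val_mul, val_xPlusUnit, val_xMinusUnit, xPlus,
    xMinus, mul_add, add_mul, mul_sub, sub_mul, mul_one, one_mul, smul_mul_assoc, mul_smul_comm,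
    smul_add, smul_sub, smul_neg, neg_mul, mul_neg, smul_smul, EE_mul_EE_same, EE_mul_EE_of_ne,
    zero_mul, smul_zero]
  match_scalars <;> field_simp <;> ring

theorem coe_weylUnit_mul_weylUnit_one {t : K} (ht : t ≠ 0) :
    ((weylUnit K i t * weylUnit K i 1 : (Matrix (BIdx l) (BIdx l) K)ˣ) :
      Matrix (BIdx l) (BIdx l) K) =
      1 + (t ^ 2 - 1) • EE K (bp i) (bp i) + ((t ^ 2)⁻¹ - 1) • EE K (bm i) (bm i) := by
  simp (disch := simp) only [Units.val_mul, coe_weylUnit K i ht, coe_weylUnit K i one_ne_zero,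
    mul_sub, sub_mul, mul_one, one_mul, smul_mul_assoc, mul_smul_comm, EE_mul_EE_same,
    EE_mul_EE_of_ne, smul_zero]
  module

theorem coe_weylUnit_one_mul_wRefl :
    (weylUnit K i 1 : Matrix (BIdx l) (BIdx l) K) * wRefl K i =
      1 - (2 : K) • EE K (bz l) (bz l) := by
  simp (disch := simp) only [coe_weylUnit K i one_ne_zero, wRefl,
    mul_sub, sub_mul, mul_one, one_mul, smul_mul_assoc, EE_mul_EE_same, EE_mul_EE_of_ne, smul_zero]
  module

theorem coe_weylUnit_one :
    (weylUnit K i 1 : Matrix (BIdx l) (BIdx l) K) =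
      xPlus K i 1 * xMinus K i (-1) * xPlus K i 1 := by
  simp [weylUnit]

end ShortRoot

section Diagonal

variable {K : Type*} [Field K] {l : ℕ}

theorem diagonal_eq_one_add_EE (i : Fin l) (a b : K) :
    diagonal (Sum.elim (fun _ : Fin 1 => (1 : K))
      (Sum.elim (fun j => if j = i then a else 1) (fun j => if j = i then b else 1))) =
      1 + (a - 1) • EE K (bp i) (bp i) + (b - 1) • EE K (bm i) (bm i) := by
  rw [← diagonal_one, EE, EE, ← diagonal_single, ← diagonal_single, ← diagonal_smul,
    ← diagonal_smul, diagonal_add, diagonal_add]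
  congr 1
  funext j
  rcases j with _ | j | j <;> simp [bp, bm, Pi.single_apply] <;> split_ifs <;> ring

theorem diagonal_neg_one_eq_one_sub_EE :
    diagonal (Sum.elim (fun _ : Fin 1 => (-1 : K))
      (Sum.elim (fun _ : Fin l => (1 : K)) (fun _ : Fin l => (1 : K)))) =
      1 - (2 : K) • EE K (bz l) (bz l) := by
  rw [← diagonal_one, EE, ← diagonal_single, ← diagonal_smul, diagonal_sub]
  congr 1
  funext j
  rcases j with j | j | j <;> simp [bz, Fin.fin_one_eq_zero]
  norm_num

end Diagonal

open ShortRoot in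
theorem stmt_10_general (K : Type*) [Field K]
    (l : ℕ) (lst : Fin l) (hlst : (lst : ℕ) = l - 1)
    (wl : Matrix (BIdx l) (BIdx l) K)
    (hwl : wl = 1 - EE K (bp lst) (bp lst) - EE K (bm lst) (bm lst)
      - EE K (bp lst) (bm lst) - EE K (bm lst) (bp lst)) :
    (∀ lam t : K, t ≠ 0 → lam = t ^ 2 →
      ∃ u ∈ Subgroup.closure (BlGens K l),
        (u : Matrix (BIdx l) (BIdx l) K) =
          Matrix.diagonal (Sum.elim (fun _ : Fin 1 => (1 : K)) (Sum.elim
            (fun i : Fin l => if (i : ℕ) = l - 1 then lam else 1)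
            (fun i : Fin l => if (i : ℕ) = l - 1 then lam⁻¹ else 1)))) ∧
    ((1 + (1 : K) • ((2 : K) • EE K (bp lst) (bz l) - EE K (bz l) (bm lst))
        - ((1 : K) ^ 2) • EE K (bp lst) (bm lst)) *
      (1 + (-1 : K) • (-((2 : K) • EE K (bm lst) (bz l)) + EE K (bz l) (bp lst))
        - ((-1 : K) ^ 2) • EE K (bm lst) (bp lst)) *
      (1 + (1 : K) • ((2 : K) • EE K (bp lst) (bz l) - EE K (bz l) (bm lst))
        - ((1 : K) ^ 2) • EE K (bp lst) (bm lst)) =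
      1 - EE K (bm lst) (bm lst) - EE K (bm lst) (bp lst) - EE K (bp lst) (bp lst)
        - (2 : K) • EE K (bz l) (bz l) - EE K (bp lst) (bm lst)) ∧
    ((1 - EE K (bm lst) (bm lst) - EE K (bm lst) (bp lst) - EE K (bp lst) (bp lst)
        - (2 : K) • EE K (bz l) (bz l) - EE K (bp lst) (bm lst)) * wl =
      Matrix.diagonal (Sum.elim (fun _ : Fin 1 => (-1 : K))
        (Sum.elim (fun _ : Fin l => (1 : K)) (fun _ : Fin l => (1 : K))))) ∧
    (∃ u ∈ Subgroup.closure (BlGens K l ∪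
        {v : (Matrix (BIdx l) (BIdx l) K)ˣ | (v : Matrix (BIdx l) (BIdx l) K) = wl}),
      (u : Matrix (BIdx l) (BIdx l) K) =
        Matrix.diagonal (Sum.elim (fun _ : Fin 1 => (-1 : K))
          (Sum.elim (fun _ : Fin l => (1 : K)) (fun _ : Fin l => (1 : K))))) := by
  subst hwl
  have hlast (j : Fin l) : (j : ℕ) = l - 1 ↔ j = lst := by rw [← hlst, Fin.val_inj]
  have hn1 : (weylUnit K lst 1 : Matrix (BIdx l) (BIdx l) K) =
      1 - EE K (bm lst) (bm lst) - EE K (bm lst) (bp lst) - EE K (bp lst) (bp lst)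
        - (2 : K) • EE K (bz l) (bz l) - EE K (bp lst) (bm lst) := by
    rw [coe_weylUnit K lst one_ne_zero]
    module
  simp only [hlast, diagonal_eq_one_add_EE, diagonal_neg_one_eq_one_sub_EE]
  refine ⟨fun lam t ht hlam => ?_, ?_, ?_, ?_⟩
  · refine ⟨weylUnit K lst t * weylUnit K lst 1,
      mul_mem (weylUnit_mem_closure K lst t) (weylUnit_mem_closure K lst 1), ?_⟩
    rw [coe_weylUnit_mul_weylUnit_one K lst ht, hlam]
  · exact (coe_weylUnit_one K lst).symm.trans hn1
  · exact hn1 ▸ coe_weylUnit_one_mul_wRefl K lst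
  · refine ⟨weylUnit K lst 1 * ⟨wRefl K lst, wRefl K lst, wRefl_mul_self K lst,
      wRefl_mul_self K lst⟩, mul_mem ?_ ?_, coe_weylUnit_one_mul_wRefl K lst⟩
    · exact Subgroup.closure_mono Set.subset_union_left (weylUnit_mem_closure K lst 1)
    · exact Subgroup.subset_closure (Set.mem_union_right _ rfl)

/-- (1) for every nonzero square `λ`, the diagonal matrix
`diag(1,1,…,1,λ,1,…,1,λ⁻¹)` is a product of `B_l` Chevalley generators;
(2) `x_{l,0}(1)·x_{0,l}(-1)·x_{l,0}(1) = I - e_{-l,-l} - e_{-l,l} - e_{l,l}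
- 2e_{0,0} - e_{l,-l}`, multiplying it by `w_l` yields `diag(-1,1,…,1)`, and
hence `diag(-1,1,…,1)` lies in the subgroup generated by the `B_l` Chevalley
generators together with `w_l`. -/
theorem stmt_10 (K : Type*) [Field K] [Fintype K] (hchar : ringChar K ≠ 2)
    (l : ℕ) (hl : 2 ≤ l) (lst : Fin l) (hlst : (lst : ℕ) = l - 1)
    (wl : Matrix (BIdx l) (BIdx l) K)
    (hwl : wl = 1 - EE K (bp lst) (bp lst) - EE K (bm lst) (bm lst)
      - EE K (bp lst) (bm lst) - EE K (bm lst) (bp lst)) :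
    (∀ lam t : K, t ≠ 0 → lam = t ^ 2 →
      ∃ u ∈ Subgroup.closure (BlGens K l),
        (u : Matrix (BIdx l) (BIdx l) K) =
          Matrix.diagonal (Sum.elim (fun _ : Fin 1 => (1 : K)) (Sum.elim
            (fun i : Fin l => if (i : ℕ) = l - 1 then lam else 1)
            (fun i : Fin l => if (i : ℕ) = l - 1 then lam⁻¹ else 1)))) ∧
    ((1 + (1 : K) • ((2 : K) • EE K (bp lst) (bz l) - EE K (bz l) (bm lst))
        - ((1 : K) ^ 2) • EE K (bp lst) (bm lst)) *
      (1 + (-1 : K) • (-((2 : K) • EE K (bm lst) (bz l)) + EE K (bz l) (bp lst))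
        - ((-1 : K) ^ 2) • EE K (bm lst) (bp lst)) *
      (1 + (1 : K) • ((2 : K) • EE K (bp lst) (bz l) - EE K (bz l) (bm lst))
        - ((1 : K) ^ 2) • EE K (bp lst) (bm lst)) =
      1 - EE K (bm lst) (bm lst) - EE K (bm lst) (bp lst) - EE K (bp lst) (bp lst)
        - (2 : K) • EE K (bz l) (bz l) - EE K (bp lst) (bm lst)) ∧
    ((1 - EE K (bm lst) (bm lst) - EE K (bm lst) (bp lst) - EE K (bp lst) (bp lst)
        - (2 : K) • EE K (bz l) (bz l) - EE K (bp lst) (bm lst)) * wl =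
      Matrix.diagonal (Sum.elim (fun _ : Fin 1 => (-1 : K))
        (Sum.elim (fun _ : Fin l => (1 : K)) (fun _ : Fin l => (1 : K))))) ∧
    (∃ u ∈ Subgroup.closure (BlGens K l ∪
        {v : (Matrix (BIdx l) (BIdx l) K)ˣ | (v : Matrix (BIdx l) (BIdx l) K) = wl}),
      (u : Matrix (BIdx l) (BIdx l) K) =
        Matrix.diagonal (Sum.elim (fun _ : Fin 1 => (-1 : K))
          (Sum.elim (fun _ : Fin l => (1 : K)) (fun _ : Fin l => (1 : K))))) :=
  stmt_10_general K l lst hlst wl hwl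
end

section
/- Let g = [[α,X,Y],[E,A,B],[F,C,D]] be a (2l+1)×(2l+1) matrix over 𝔽_q (blocks of sizes 1, l, l) satisfying ᵀg·β·g = β with β = [[2,0,0],[0,0,I_l],[0,I_l,0]]. If C is the diagonal matrix whose first m diagonal entries equal 1 and whose remaining entries equal 0 (0 < m < l), and the first m entries of the row vector X are 0, then writing A = [[A₁₁,A₁₂],[A₂₁,A₂₂]] with respect to the partition (m, l−m), one has A₁₂ = 0 and A₁₁ is skew-symmetric. -/
/-!
Comparing the middle diagonal blocks of `gᵀ β g = β` gives `Xᵀ d X + Aᵀ C + Cᵀ A = 0`, where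
`d = diag 2`. When `C = diag(1_m, 0)` and the first `m` columns of `X` vanish, the first block
row of the left side is `(A₁₁ᵀ + A₁₁, A₁₂)`.
-/

open Matrix

section BlockCongruence

variable {R : Type*} [CommRing R] {k n p q : Type*}

theorem fromBlocks_transpose_mul_blockDiag_mul [Fintype k] [Fintype n]
    (a : Matrix k k R) (Z : Matrix k n R) (W : Matrix n k R) (M : Matrix n n R)
    (d : Matrix k k R) (J : Matrix n n R) :
    (fromBlocks a Z W M)ᵀ * fromBlocks d 0 0 J * fromBlocks a Z W M =
      fromBlocks (aᵀ * d * a + Wᵀ * J * W) (aᵀ * d * Z + Wᵀ * J * M)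
        (Zᵀ * d * a + Mᵀ * J * W) (Zᵀ * d * Z + Mᵀ * J * M) := by
  simp [fromBlocks_transpose, fromBlocks_multiply, Matrix.mul_assoc]

theorem fromBlocks_transpose_mul_hyperbolic_mul [Fintype p] [DecidableEq p]
    (A : Matrix p n R) (B : Matrix p q R) (C : Matrix p n R) (D : Matrix p q R) :
    (fromBlocks A B C D)ᵀ * (fromBlocks 0 1 1 0 : Matrix (p ⊕ p) (p ⊕ p) R) *
        fromBlocks A B C D =
      fromBlocks (Aᵀ * C + Cᵀ * A) (Aᵀ * D + Cᵀ * B) (Bᵀ * C + Dᵀ * A) (Bᵀ * D + Dᵀ * B) := by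
  simp [fromBlocks_transpose, fromBlocks_multiply, add_comm]

theorem transpose_fromCols_mul_mul_fromCols [Fintype k] (X : Matrix k n R) (Y : Matrix k p R)
    (d : Matrix k k R) :
    (fromCols X Y)ᵀ * d * fromCols X Y =
      fromBlocks (Xᵀ * d * X) (Xᵀ * d * Y) (Yᵀ * d * X) (Yᵀ * d * Y) := by
  simp [transpose_fromCols, fromRows_mul, mul_fromCols]

theorem transpose_mul_mul_add_eq_zero_of_orthogonal [Fintype k] [Fintype n] [DecidableEq n] (a d : Matrix k k R) (X Y : Matrix k n R)
    (E F : Matrix n k R) (A B C D : Matrix n n R)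
    (h : (fromBlocks a (fromCols X Y) (fromRows E F) (fromBlocks A B C D))ᵀ *
        fromBlocks d 0 0 (fromBlocks 0 1 1 0) *
        fromBlocks a (fromCols X Y) (fromRows E F) (fromBlocks A B C D) =
      fromBlocks d 0 0 (fromBlocks 0 1 1 0)) :
    Xᵀ * d * X + (Aᵀ * C + Cᵀ * A) = 0 := by
  rw [fromBlocks_transpose_mul_blockDiag_mul] at h
  have h₂₂ := (fromBlocks_inj.mp h).2.2.2
  rw [transpose_fromCols_mul_mul_fromCols, fromBlocks_transpose_mul_hyperbolic_mul,
    fromBlocks_add] at h₂₂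
  exact (fromBlocks_inj.mp h₂₂).1

theorem eq_zero_and_transpose_eq_neg_of_add_eq_zero [Fintype k] [Fintype n] [Fintype p]
    [DecidableEq n] [DecidableEq p] (d : Matrix k k R) (X : Matrix k (n ⊕ p) R)
    (A₁₁ : Matrix n n R) (A₁₂ : Matrix n p R) (A₂₁ : Matrix p n R) (A₂₂ : Matrix p p R)
    (hX : ∀ i j, X i (Sum.inl j) = 0)
    (h : Xᵀ * d * X + ((fromBlocks A₁₁ A₁₂ A₂₁ A₂₂)ᵀ * fromBlocks 1 0 0 0 +
      (fromBlocks 1 0 0 0)ᵀ * fromBlocks A₁₁ A₁₂ A₂₁ A₂₂) = 0) :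
    A₁₂ = 0 ∧ A₁₁ᵀ = -A₁₁ := by
  have hX₁ : X.toCols₁ = 0 := by
    ext i j
    exact hX i j
  rw [← fromCols_toCols X, hX₁, transpose_fromCols_mul_mul_fromCols] at h
  obtain ⟨h₁₁, h₁₂, -⟩ : A₁₁ᵀ + A₁₁ = 0 ∧ A₁₂ = 0 ∧ X.toCols₂ᵀ * d * X.toCols₂ = 0 := by
    simpa [fromBlocks_transpose, fromBlocks_multiply, fromBlocks_add, ← fromBlocks_zero] using h
  exact ⟨h₁₂, eq_neg_of_add_eq_zero_left h₁₁⟩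

end BlockCongruence

theorem stmt_12_general (K : Type*) [Field K]
    (l m : ℕ) (α : K)
    (X Y : Matrix (Fin 1) (Fin m ⊕ Fin (l - m)) K)
    (E Fm : Matrix (Fin m ⊕ Fin (l - m)) (Fin 1) K)
    (A11 : Matrix (Fin m) (Fin m) K) (A12 : Matrix (Fin m) (Fin (l - m)) K)
    (A21 : Matrix (Fin (l - m)) (Fin m) K) (A22 : Matrix (Fin (l - m)) (Fin (l - m)) K)
    (A B C D : Matrix (Fin m ⊕ Fin (l - m)) (Fin m ⊕ Fin (l - m)) K)
    (hA : A = fromBlocks A11 A12 A21 A22)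
    (hC : C = fromBlocks 1 0 0 0)
    (hX : ∀ (r : Fin 1) (j : Fin m), X r (Sum.inl j) = 0)
    (β g : Matrix (Fin 1 ⊕ ((Fin m ⊕ Fin (l - m)) ⊕ (Fin m ⊕ Fin (l - m))))
      (Fin 1 ⊕ ((Fin m ⊕ Fin (l - m)) ⊕ (Fin m ⊕ Fin (l - m)))) K)
    (hβ : β = fromBlocks (Matrix.diagonal fun _ => (2 : K)) 0 0 (fromBlocks 0 1 1 0))
    (hg : g = fromBlocks (Matrix.diagonal fun _ => α) (fromCols X Y)
      (fromRows E Fm) (fromBlocks A B C D))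
    (horth : gᵀ * β * g = β) :
    A12 = 0 ∧ A11ᵀ = -A11 := by
  subst hg hβ
  have hblock := transpose_mul_mul_add_eq_zero_of_orthogonal _ _ X Y E Fm A B C D horth
  rw [hA, hC] at hblock
  exact eq_zero_and_transpose_eq_neg_of_add_eq_zero _ X A11 A12 A21 A22 hX hblock

/-- for `g = [[α,X,Y],[E,A,B],[F,C,D]] ∈ O(2l+1,q)` with
`C = diag(1,…,1,0,…,0)` (`m` ones, `0 < m < l`) and the first `m` entries of
`X` zero, the blocks of `A` (partition `(m, l-m)`) satisfy `A₁₂ = 0` and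
`A₁₁` skew-symmetric. -/
theorem stmt_12 (K : Type*) [Field K] [Fintype K] (hchar : ringChar K ≠ 2)
    (l m : ℕ) (hl : 2 ≤ l) (hm : 0 < m) (hml : m < l) (α : K)
    (X Y : Matrix (Fin 1) (Fin m ⊕ Fin (l - m)) K)
    (E Fm : Matrix (Fin m ⊕ Fin (l - m)) (Fin 1) K)
    (A11 : Matrix (Fin m) (Fin m) K) (A12 : Matrix (Fin m) (Fin (l - m)) K)
    (A21 : Matrix (Fin (l - m)) (Fin m) K) (A22 : Matrix (Fin (l - m)) (Fin (l - m)) K)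
    (A B C D : Matrix (Fin m ⊕ Fin (l - m)) (Fin m ⊕ Fin (l - m)) K)
    (hA : A = fromBlocks A11 A12 A21 A22)
    (hC : C = fromBlocks 1 0 0 0)
    (hX : ∀ (r : Fin 1) (j : Fin m), X r (Sum.inl j) = 0)
    (β g : Matrix (Fin 1 ⊕ ((Fin m ⊕ Fin (l - m)) ⊕ (Fin m ⊕ Fin (l - m))))
      (Fin 1 ⊕ ((Fin m ⊕ Fin (l - m)) ⊕ (Fin m ⊕ Fin (l - m)))) K)
    (hβ : β = fromBlocks (Matrix.diagonal fun _ => (2 : K)) 0 0 (fromBlocks 0 1 1 0))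
    (hg : g = fromBlocks (Matrix.diagonal fun _ => α) (fromCols X Y)
      (fromRows E Fm) (fromBlocks A B C D))
    (horth : gᵀ * β * g = β) :
    A12 = 0 ∧ A11ᵀ = -A11 :=
  stmt_12_general K l m α X Y E Fm A11 A12 A21 A22 A B C D hA hC hX β g hβ hg horth
end
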